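/- arXiv:2103.04793 — 7 statements merged into one kernel-verified Lean document; each statement's English description precedes it below -/
import Mathlib

section
/- Let f : A → B be a function between sets, and let F(f) : F(A) → F(B) be the induced homomorphism between free groups. Then the kernel of F(f) equals the set K(F(f)) of F(f)-symmetric paths with respect to the generating set A ⊆ F(A). -/
/-- `ga` and `gb` are `f`-symmetric with respect to the subset `A`. -/
def IsSymmPair {G H : Type*} [Group G] [Group H] (f : G →* H) (A : Set G)
    (ga gb : G) : Prop :=
  ∃ (n : ℕ) (a b : Fin n → G) (δ : Fin n → ℤ),
    (∀ i, a i ∈ A ∧ b i ∈ A ∧ f (a i) = f (b i) ∧ (δ i = 1 ∨ δ i = -1)) ∧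
    ga = (List.ofFn fun i => a i ^ δ i).prod ∧
    gb = (List.ofFn fun i => b i ^ δ i).prod

/-- The set of `f`-symmetric paths with respect to `A`. -/
def symmPaths {G H : Type*} [Group G] [Group H] (f : G →* H) (A : Set G) : Set G :=
  {g | ∃ ga gb : G, IsSymmPair f A ga gb ∧ g = ga * gb⁻¹}

/-! Symmetric paths lie in the kernel because `F(f)` identifies the two halves of a symmetric
pair letter by letter. Conversely, choosing a preimage of each `b ∈ f(A)` gives a homomorphism
`ψ : F(B) → F(A)` with `F(f) ∘ ψ ∘ F(f) = F(f)` on generators; hence every `g` is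
`F(f)`-symmetric to `ψ (F(f) g)`, which is `1` when `g` lies in the kernel. -/

namespace IsSymmPair

variable {G H : Type*} [Group G] [Group H] {f : G →* H} {A : Set G}

theorem one : IsSymmPair f A 1 1 :=
  ⟨0, Fin.elim0, Fin.elim0, Fin.elim0, fun i => i.elim0, rfl, rfl⟩

theorem zpow {a b : G} (ha : a ∈ A) (hb : b ∈ A) (hab : f a = f b) {δ : ℤ}
    (hδ : δ = 1 ∨ δ = -1) : IsSymmPair f A (a ^ δ) (b ^ δ) :=
  ⟨1, fun _ => a, fun _ => b, fun _ => δ, fun _ => ⟨ha, hb, hab, hδ⟩, by simp, by simp⟩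

theorem mul {ga gb ga' gb' : G} (h : IsSymmPair f A ga gb) (h' : IsSymmPair f A ga' gb') :
    IsSymmPair f A (ga * ga') (gb * gb') := by
  obtain ⟨n, a, b, δ, hab, rfl, rfl⟩ := h
  obtain ⟨n', a', b', δ', hab', rfl, rfl⟩ := h'
  refine ⟨n + n', Fin.append a a', Fin.append b b', Fin.append δ δ',
    Fin.addCases (by simpa using hab) (by simpa using hab'), ?_, ?_⟩ <;>
  simp [List.ofFn_add]

theorem map_eq {ga gb : G} (h : IsSymmPair f A ga gb) : f ga = f gb := by
  obtain ⟨n, a, b, δ, hab, rfl, rfl⟩ := h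
  simp only [map_list_prod, List.map_ofFn, Function.comp_def, map_zpow, (hab _).2.2.1]

end IsSymmPair

section

variable {G H : Type*} [Group G] [Group H] (f : G →* H) (A : Set G)

theorem symmPaths_subset_ker : symmPaths f A ⊆ f.ker := by
  rintro _ ⟨ga, gb, h, rfl⟩
  simp [h.map_eq]

variable {f A}

theorem isSymmPair_map_of_mem_closure {φ : G →* G} (hφ : ∀ a ∈ A, φ a ∈ A ∧ f (φ a) = f a) {g : G}
    (hg : g ∈ Subgroup.closure A) : IsSymmPair f A g (φ g) := by
  induction hg using Subgroup.closure_induction'' with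
  | mem a ha => simpa using IsSymmPair.zpow (δ := 1) ha (hφ a ha).1 (hφ a ha).2.symm (.inl rfl)
  | inv_mem a ha =>
    simpa using IsSymmPair.zpow (δ := -1) ha (hφ a ha).1 (hφ a ha).2.symm (.inr rfl)
  | one => simpa using IsSymmPair.one
  | mul x y _ _ hx hy => simpa using hx.mul hy

theorem ker_subset_symmPaths (hA : Subgroup.closure A = ⊤) {ψ : H →* G}
    (hψ : ∀ a ∈ A, ψ (f a) ∈ A ∧ f (ψ (f a)) = f a) : (f.ker : Set G) ⊆ symmPaths f A := by
  intro g hg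
  have hpair : IsSymmPair f A g (ψ (f g)) :=
    isSymmPair_map_of_mem_closure (φ := ψ.comp f) hψ (hA ▸ Subgroup.mem_top g)
  rw [SetLike.mem_coe, MonoidHom.mem_ker] at hg
  exact ⟨g, 1, by simpa [hg] using hpair, by simp⟩

end

theorem FreeGroup.exists_section_map {A B : Type*} (f : A → B) :
    ∃ ψ : FreeGroup B →* FreeGroup A, ∀ a ∈ Set.range (FreeGroup.of : A → FreeGroup A),
      ψ (FreeGroup.map f a) ∈ Set.range FreeGroup.of ∧
        FreeGroup.map f (ψ (FreeGroup.map f a)) = FreeGroup.map f a := by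
  classical
  refine ⟨FreeGroup.lift fun b => if h : ∃ a, f a = b then FreeGroup.of h.choose else 1, ?_⟩
  rintro _ ⟨a, rfl⟩
  have h : ∃ a', f a' = f a := ⟨a, rfl⟩
  simp [h.choose_spec]

theorem ker_freeGroupMap_eq_symmPaths {A B : Type} (f : A → B) :
    ((FreeGroup.map f).ker : Set (FreeGroup A)) =
      symmPaths (FreeGroup.map f) (Set.range (FreeGroup.of : A → FreeGroup A)) := by
  obtain ⟨ψ, hψ⟩ := FreeGroup.exists_section_map f
  exact (ker_subset_symmPaths (FreeGroup.closure_range_of A) hψ).antisymm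
    (symmPaths_subset_ker _ _)
end

section
/- Let f : A → B be a function between sets. Then the kernel of the induced homomorphism F(f) : F(A) → F(B) between free groups equals the normal closure in F(A) of the set { a·b⁻¹ | a, b ∈ A, f(a) = f(b) }. -/
/-!
Sending `b` to the class of `of a` for any `a ∈ f⁻¹(b)` is well defined modulo the relators
`of a * (of b)⁻¹` with `f a = f b`, so it gives a homomorphism `F(B) → F(A) ⧸ N` that undoes
`F(f)` modulo `N`; hence every element of the kernel of `F(f)` lies in `N`.
-/

open Subgroup

namespace FreeGroup

variable {A B : Type*} (f : A → B)

def fiberRelators : Set (FreeGroup A) :=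
  {x | ∃ a b : A, f a = f b ∧ x = of a * (of b)⁻¹}

theorem normalClosure_fiberRelators_le_ker_map :
    normalClosure (fiberRelators f) ≤ (map f).ker := by
  refine normalClosure_le_normal ?_
  rintro _ ⟨a, b, hab, rfl⟩
  simp [hab]

variable {f} in
theorem mk_of_eq_mk_of {a b : A} (hab : f a = f b) :
    ((of a : FreeGroup A) : FreeGroup A ⧸ normalClosure (fiberRelators f)) = of b :=
  QuotientGroup.eq_iff_div_mem.mpr <|
    subset_normalClosure ⟨a, b, hab, div_eq_mul_inv _ _⟩

noncomputable def liftThroughFibers [Nonempty A] :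
    FreeGroup B →* FreeGroup A ⧸ normalClosure (fiberRelators f) :=
  lift fun b => (of (Function.invFun f b) : FreeGroup A)

theorem liftThroughFibers_comp_map [Nonempty A] :
    (liftThroughFibers f).comp (map f) = QuotientGroup.mk' (normalClosure (fiberRelators f)) :=
  ext_hom _ _ fun a => by
    simpa [liftThroughFibers] using mk_of_eq_mk_of (f := f) (Function.invFun_eq ⟨a, rfl⟩)

theorem ker_map_le_normalClosure_fiberRelators :
    (map f).ker ≤ normalClosure (fiberRelators f) := by
  cases isEmpty_or_nonempty A
  · intro x _
    rw [Subsingleton.elim x 1]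
    exact one_mem _
  · calc (map f).ker ≤ (liftThroughFibers f).ker.comap (map f) := (map f).ker_le_comap _
      _ = normalClosure (fiberRelators f) := by
          rw [MonoidHom.comap_ker, liftThroughFibers_comp_map, QuotientGroup.ker_mk']

end FreeGroup

theorem ker_freeGroupMap_eq_normalClosure {A B : Type} (f : A → B) :
    (FreeGroup.map f).ker =
      Subgroup.normalClosure
        {x : FreeGroup A | ∃ a b : A, f a = f b ∧
          x = FreeGroup.of a * (FreeGroup.of b)⁻¹} :=
  le_antisymm (FreeGroup.ker_map_le_normalClosure_fiberRelators f)
    (FreeGroup.normalClosure_fiberRelators_le_ker_map f)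
end

section
/- Let f : A → B be a function and let ν = a₁^{δ₁}⋯a_n^{δ_n} be a word in the letters A ∪ A⁻¹ representing an element g of the free group F(A) with g ∈ Ker(F(f)). Then n is even, and there exists a perfect matching of the letter positions {1,…,n} into pairs (i,j) with i < j such that f(aᵢ) = f(a_j), δᵢ = −δ_j, and the matching is non-crossing: for any two matched pairs (i,j) and (l,m) with l < i, one has m > j or m < i. -/
/-!
If the image word `f(a₁)^{δ₁} ⋯ f(aₙ)^{δₙ}` is trivial in `F(B)`, it reduces to the empty word by
repeatedly deleting adjacent inverse letters. Reading the reductions backwards, the word is built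
from the empty word by inserting adjacent inverse pairs, and matching each inserted pair with
itself keeps the matching non-crossing: a new adjacent pair is nested inside or disjoint from every
old pair. A fixed-point-free involution of `Fin n` forces `n` to be even.
-/

/-- A fixpoint-free involution `p` of `Fin n` (a perfect matching of positions)
is non-crossing if no two matched pairs interleave as `i < j < p i < p j`. -/
def NonCrossing {n : ℕ} (p : Fin n → Fin n) : Prop :=
  ∀ i j : Fin n, i < p i → j < p j → i < j → j < p i → p j < p i

theorem Function.Involutive.even_card_of_forall_ne {β : Type*} [Fintype β] {σ : β → β}
    (hσ : Function.Involutive σ) (hne : ∀ x, σ x ≠ x) : Even (Fintype.card β) := by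
  classical
  let f : Function.End β := σ
  have hsq : f ^ 2 ^ 1 = 1 := funext hσ
  have hmod := Equiv.Perm.card_fixedPoints_modEq (p := 2) hsq
  have hfix : Function.fixedPoints f = ∅ :=
    Set.eq_empty_of_forall_notMem fun x hx => hne x hx
  simp only [hfix] at hmod
  exact Nat.even_iff.mpr hmod

theorem zpow_eq_cond_of_eq_one_or_eq_neg_one {G : Type*} [Group G] (x : G) {d : ℤ}
    (hd : d = 1 ∨ d = -1) : x ^ d = cond (decide (d = 1)) x x⁻¹ := by
  rcases hd with rfl | rfl <;> simp

namespace FreeGroup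

variable {α : Type*}

theorem mk_eq_prod_map (L : List (α × Bool)) :
    mk L = (L.map fun x => cond x.2 (of x.1) (of x.1)⁻¹).prod := by
  rw [← lift_mk, lift_of_apply]

theorem red_nil_of_mk_eq_one {L : List (α × Bool)} (h : mk L = 1) : Red L [] := by
  obtain ⟨L', hL', hnil⟩ := Red.exact.mp (h.trans one_eq_mk)
  rwa [Red.nil_iff.mp hnil] at hL'

end FreeGroup

/-- The increasing bijection from `ℕ` onto `ℕ ∖ {k, k + 1}`. -/
def skipPair (k j : ℕ) : ℕ := if j < k then j else j + 2

def unskipPair (k i : ℕ) : ℕ := if i < k then i else i - 2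

theorem skipPair_strictMono (k : ℕ) : StrictMono (skipPair k) := by
  intro i j h; unfold skipPair; split_ifs <;> omega

theorem eq_or_eq_or_exists_skipPair (k i : ℕ) : i = k ∨ i = k + 1 ∨ ∃ j, i = skipPair k j := by
  by_contra! h
  exact h.2.2 (unskipPair k i) (by unfold skipPair unskipPair; split_ifs <;> omega)

theorem unskipPair_skipPair (k j : ℕ) : unskipPair k (skipPair k j) = j := by
  unfold skipPair unskipPair; split_ifs <;> omega

/-- Extends a matching `p` by matching the new positions `k` and `k + 1` with each other. -/
def insertPair (k : ℕ) (p : ℕ → ℕ) (i : ℕ) : ℕ :=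
  if i = k then k + 1 else if i = k + 1 then k else skipPair k (p (unskipPair k i))

section

variable {k : ℕ} {p : ℕ → ℕ}

@[simp] theorem insertPair_self : insertPair k p k = k + 1 := by simp [insertPair]

@[simp] theorem insertPair_succ : insertPair k p (k + 1) = k := by simp [insertPair]

@[simp] theorem insertPair_skipPair (j : ℕ) : insertPair k p (skipPair k j) = skipPair k (p j) := by
  unfold insertPair; rw [unskipPair_skipPair]; unfold skipPair; split_ifs <;> omega

end

theorem List.getElem?_append_cons_cons_skipPair {α : Type*} (L₁ L₂ : List α) (u v : α) (j : ℕ) :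
    (L₁ ++ u :: v :: L₂)[skipPair L₁.length j]? = (L₁ ++ L₂)[j]? := by
  unfold skipPair
  split_ifs with h
  · simp [List.getElem?_append_left h]
  · rw [List.getElem?_append_right (by omega), List.getElem?_append_right (by omega)]
    rw [show j + 2 - L₁.length = (j - L₁.length) + 2 by omega]
    simp

/-- Positions are natural numbers rather than `Fin L.length` so that a matching survives the
insertion of letters; only the values of `p` below `L.length` matter. -/
structure IsCancellingMatching {α : Type*} (L : List (α × Bool)) (p : ℕ → ℕ) : Prop where
  lt_length : ∀ i < L.length, p i < L.length
  involutive : ∀ i < L.length, p (p i) = i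
  ne_self : ∀ i < L.length, p i ≠ i
  getElem?_eq : ∀ i < L.length, L[p i]? = L[i]?.map (Prod.map id not)
  noncrossing : ∀ i < L.length, ∀ j, i < p i → j < p j → i < j → j < p i → p j < p i

namespace IsCancellingMatching

variable {α : Type*}

theorem nil : IsCancellingMatching ([] : List (α × Bool)) id := by
  constructor <;> simp

theorem insert {L₁ L₂ : List (α × Bool)} {p : ℕ → ℕ} (h : IsCancellingMatching (L₁ ++ L₂) p)
    (x : α) (b : Bool) :
    IsCancellingMatching (L₁ ++ (x, b) :: (x, !b) :: L₂) (insertPair L₁.length p) := by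
  set k := L₁.length
  have hlen : (L₁ ++ (x, b) :: (x, !b) :: L₂).length = (L₁ ++ L₂).length + 2 := by simp; omega
  have hk : k ≤ (L₁ ++ L₂).length := by simp [k]
  have skip_lt {j : ℕ} : skipPair k j < (L₁ ++ L₂).length + 2 ↔ j < (L₁ ++ L₂).length := by
    unfold skipPair; split_ifs <;> omega
  have skip_ne {j : ℕ} : skipPair k j ≠ k ∧ skipPair k j ≠ k + 1 := by
    unfold skipPair; split_ifs <;> omega
  have get_k : (L₁ ++ (x, b) :: (x, !b) :: L₂)[k]? = some (x, b) := by simp [k]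
  have get_k1 : (L₁ ++ (x, b) :: (x, !b) :: L₂)[k + 1]? = some (x, !b) := by simp [k]
  constructor <;> simp only [hlen]
  · intro i hi
    rcases eq_or_eq_or_exists_skipPair k i with rfl | rfl | ⟨j, rfl⟩
    · rw [insertPair_self]; omega
    · rw [insertPair_succ]; omega
    · rw [insertPair_skipPair, skip_lt]; exact h.lt_length j (skip_lt.mp hi)
  · intro i hi
    rcases eq_or_eq_or_exists_skipPair k i with rfl | rfl | ⟨j, rfl⟩
    · simp
    · simp
    · rw [insertPair_skipPair, insertPair_skipPair, h.involutive j (skip_lt.mp hi)]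
  · intro i hi
    rcases eq_or_eq_or_exists_skipPair k i with rfl | rfl | ⟨j, rfl⟩
    · simp
    · simp
    · rw [insertPair_skipPair, Ne, (skipPair_strictMono k).injective.eq_iff]
      exact h.ne_self j (skip_lt.mp hi)
  · intro i hi
    rcases eq_or_eq_or_exists_skipPair k i with rfl | rfl | ⟨j, rfl⟩
    · simp [get_k, get_k1]
    · simp [get_k, get_k1]
    · rw [insertPair_skipPair, List.getElem?_append_cons_cons_skipPair,
        List.getElem?_append_cons_cons_skipPair]
      exact h.getElem?_eq j (skip_lt.mp hi)
  · intro i hi j hip hjp hij hji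
    rcases eq_or_eq_or_exists_skipPair k i with rfl | rfl | ⟨i, rfl⟩
    · rw [insertPair_self] at hji; omega
    · rw [insertPair_succ] at hip; omega
    rcases eq_or_eq_or_exists_skipPair k j with rfl | rfl | ⟨j, rfl⟩
    · rw [insertPair_self]
      rw [insertPair_skipPair] at hji ⊢
      have := skip_ne (j := p i)
      omega
    · rw [insertPair_succ] at hjp; omega
    simp only [insertPair_skipPair, (skipPair_strictMono k).lt_iff_lt] at *
    exact h.noncrossing i (skip_lt.mp hi) j hip hjp hij hji

theorem exists_fin_noncrossing {n : ℕ} {g : Fin n → α × Bool} {p : ℕ → ℕ}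
    (h : IsCancellingMatching (List.ofFn g) p) :
    ∃ P : Fin n → Fin n, Function.Involutive P ∧ (∀ i, P i ≠ i) ∧
      (∀ i, g (P i) = Prod.map id not (g i)) ∧ NonCrossing P := by
  have lt (i : Fin n) : (i : ℕ) < (List.ofFn g).length := by simp
  have lt_p (i : Fin n) : p i < n := by simpa using h.lt_length i (lt i)
  refine ⟨fun i => ⟨p i, lt_p i⟩, fun i => Fin.ext (h.involutive i (lt i)),
    fun i hi => h.ne_self i (lt i) (Fin.val_eq_of_eq hi), fun i => ?_,
    fun i j => h.noncrossing i (lt i) j⟩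
  simpa [List.getElem?_ofFn, lt_p i] using h.getElem?_eq i (lt i)

end IsCancellingMatching

theorem FreeGroup.Red.exists_isCancellingMatching {α : Type*} {L : List (α × Bool)}
    (h : FreeGroup.Red L []) : ∃ p, IsCancellingMatching L p := by
  induction h using Relation.ReflTransGen.head_induction_on with
  | refl => exact ⟨id, .nil⟩
  | head step _ ih =>
    obtain ⟨p, hp⟩ := ih
    cases step with
    | not => exact ⟨_, hp.insert _ _⟩

theorem exists_noncrossing_matching_of_mem_ker {A B : Type} (f : A → B)
    (n : ℕ) (a : Fin n → A) (δ : Fin n → ℤ)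
    (hδ : ∀ i, δ i = 1 ∨ δ i = -1)
    (hg : (List.ofFn fun i => FreeGroup.of (a i) ^ δ i).prod ∈ (FreeGroup.map f).ker) :
    Even n ∧
      ∃ p : Fin n → Fin n, Function.Involutive p ∧ (∀ i, p i ≠ i) ∧
        (∀ i, f (a (p i)) = f (a i)) ∧ (∀ i, δ (p i) = -δ i) ∧ NonCrossing p := by
  set g : Fin n → B × Bool := fun i => (f (a i), decide (δ i = 1))
  have hmk : FreeGroup.mk (List.ofFn g) = 1 := by
    rw [← MonoidHom.mem_ker.mp hg, map_list_prod, List.map_ofFn, FreeGroup.mk_eq_prod_map,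
      List.map_ofFn]
    refine congrArg (fun F => (List.ofFn F).prod) (funext fun i => ?_)
    rw [Function.comp_apply, Function.comp_apply, map_zpow, FreeGroup.map.of,
      zpow_eq_cond_of_eq_one_or_eq_neg_one _ (hδ i)]
  obtain ⟨p, hp⟩ := (FreeGroup.red_nil_of_mk_eq_one hmk).exists_isCancellingMatching
  obtain ⟨P, hinv, hne, hletter, hnc⟩ := hp.exists_fin_noncrossing
  refine ⟨by simpa using hinv.even_card_of_forall_ne hne, P, hinv, hne,
    fun i => congrArg Prod.fst (hletter i), fun i => ?_, hnc⟩
  have hsign := congrArg Prod.snd (hletter i)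
  rcases hδ i with h | h <;> rcases hδ (P i) with h' | h' <;> simp_all [g]
end

section
/- Let f : G → H and h : G → K be group homomorphisms and A ⊆ G a generating set. The set K(⟨f,h⟩) of ⟨f,h⟩-symmetric paths is a normal subgroup of G. -/
/-- `ga, gb, gc, gd` form an `⟨f,h⟩`-symmetric quadruple with respect to `A`. -/
def IsSymmQuad {G H K : Type*} [Group G] [Group H] [Group K]
    (f : G →* H) (h : G →* K) (A : Set G) (ga gb gc gd : G) : Prop :=
  ∃ (n : ℕ) (a b c d : Fin n → G) (δ : Fin n → ℤ),
    (∀ i, a i ∈ A ∧ b i ∈ A ∧ c i ∈ A ∧ d i ∈ A) ∧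
    (∀ i, f (a i) = f (b i) ∧ f (d i) = f (c i) ∧
          h (a i) = h (d i) ∧ h (b i) = h (c i)) ∧
    (∀ i, δ i = 1 ∨ δ i = -1) ∧
    ga = (List.ofFn fun i => a i ^ δ i).prod ∧
    gb = (List.ofFn fun i => b i ^ δ i).prod ∧
    gc = (List.ofFn fun i => c i ^ δ i).prod ∧
    gd = (List.ofFn fun i => d i ^ δ i).prod

/-- The set of `⟨f,h⟩`-symmetric paths with respect to `A`. -/
def symmPaths2 {G H K : Type*} [Group G] [Group H] [Group K]
    (f : G →* H) (h : G →* K) (A : Set G) : Set G :=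
  {g | ∃ ga gb gc gd : G, IsSymmQuad f h A ga gb gc gd ∧ g = ga * gb⁻¹ * gc * gd⁻¹}

/-! The symmetric quadruples form the subgroup `Q` of `G × G × G × G` generated by the admissible
quadruples of generators, and the symmetric paths are the image of `Q` under
`(a, b, c, d) ↦ a * b⁻¹ * c * d⁻¹`. Since `A` generates `G`, `Q` contains the diagonal, and `Q` is
stable under the endomorphisms `(a, b, c, d) ↦ (c, d, a, b), (d, c, b, a), (a, a, d, d)`, which
preserve admissibility. Conjugating by diagonal elements gives normality, the reversal gives
inverses, and the path of `(a, b, c, d) * (a, a, d, d)⁻¹ * (c', d', a', b')` is a conjugate of the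
product of the paths of `(a, b, c, d)` and `(a', b', c', d')`. -/

open Subgroup

theorem Prod.fst_list_prod {M N : Type*} [Monoid M] [Monoid N] (l : List (M × N)) :
    l.prod.1 = (l.map Prod.fst).prod :=
  map_list_prod (MonoidHom.fst M N) l

theorem Prod.snd_list_prod {M N : Type*} [Monoid M] [Monoid N] (l : List (M × N)) :
    l.prod.2 = (l.map Prod.snd).prod :=
  map_list_prod (MonoidHom.snd M N) l

namespace Subgroup

variable {G : Type*} [Group G]

theorem mem_closure_iff_exists_prod_ofFn_zpow {S : Set G} {x : G} :
    x ∈ closure S ↔ ∃ (n : ℕ) (s : Fin n → G) (δ : Fin n → ℤ),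
      (∀ i, s i ∈ S) ∧ (∀ i, δ i = 1 ∨ δ i = -1) ∧ x = (List.ofFn fun i => s i ^ δ i).prod := by
  classical
  constructor
  · intro hx
    rw [← mem_toSubmonoid, closure_toSubmonoid] at hx
    obtain ⟨l, hl, rfl⟩ := Submonoid.exists_list_of_mem_closure hx
    refine ⟨l.length, fun i => if l[i] ∈ S then l[i] else l[i]⁻¹,
      fun i => if l[i] ∈ S then 1 else -1, fun i => ?_, fun i => ?_, ?_⟩
    · have := hl _ (List.getElem_mem i.2)
      dsimp only
      split_ifs with h
      exacts [h, this.resolve_left h]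
    · dsimp only
      split_ifs <;> simp
    · conv_lhs => rw [← List.ofFn_getElem (xs := l)]
      congr 1
      refine congrArg List.ofFn (funext fun i => ?_)
      dsimp only
      split_ifs <;> simp
  · rintro ⟨n, s, δ, hs, -, rfl⟩
    refine (closure S).list_prod_mem fun y hy => ?_
    obtain ⟨i, rfl⟩ := List.mem_ofFn.1 hy
    exact zpow_mem (subset_closure (hs i)) _

theorem apply_mem_closure_of_mapsTo {N : Type*} [Group N] {S : Set G} {T : Set N} {σ : G →* N}
    (hσ : Set.MapsTo σ S T) {x : G} (hx : x ∈ closure S) : σ x ∈ closure T :=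
  ((closure_mono hσ.subset_preimage).trans (MonoidHom.closure_preimage_le σ T)) hx

end Subgroup

section

variable {G : Type*} [Group G]

def quadPath (q : G × G × G × G) : G := q.1 * q.2.1⁻¹ * q.2.2.1 * q.2.2.2⁻¹

structure IsSymmetricQuadSubgroup (Q : Subgroup (G × G × G × G)) : Prop where
  diag_mem : ∀ g, (g, g, g, g) ∈ Q
  swap_mem : ∀ {a b c d}, (a, b, c, d) ∈ Q → (c, d, a, b) ∈ Q
  reverse_mem : ∀ {a b c d}, (a, b, c, d) ∈ Q → (d, c, b, a) ∈ Q
  collapse_mem : ∀ {a b c d}, (a, b, c, d) ∈ Q → (a, a, d, d) ∈ Q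

namespace IsSymmetricQuadSubgroup

variable {Q : Subgroup (G × G × G × G)}

theorem conj_mem_image (hQ : IsSymmetricQuadSubgroup Q) (g : G) {x : G}
    (hx : x ∈ quadPath '' Q) : g * x * g⁻¹ ∈ quadPath '' Q := by
  obtain ⟨q, hq, rfl⟩ := hx
  refine ⟨(g, g, g, g) * q * (g, g, g, g)⁻¹,
    Q.mul_mem (Q.mul_mem (hQ.diag_mem g) hq) (Q.inv_mem (hQ.diag_mem g)), ?_⟩
  simp only [quadPath, Prod.fst_mul, Prod.snd_mul, Prod.fst_inv, Prod.snd_inv]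
  group

theorem inv_mem_image (hQ : IsSymmetricQuadSubgroup Q) {x : G} (hx : x ∈ quadPath '' Q) :
    x⁻¹ ∈ quadPath '' Q := by
  obtain ⟨⟨a, b, c, d⟩, hq, rfl⟩ := hx
  exact ⟨(d, c, b, a), hQ.reverse_mem hq, by simp only [quadPath]; group⟩

theorem mul_mem_image (hQ : IsSymmetricQuadSubgroup Q) {x y : G} (hx : x ∈ quadPath '' Q)
    (hy : y ∈ quadPath '' Q) : x * y ∈ quadPath '' Q := by
  obtain ⟨⟨a, b, c, d⟩, hq, rfl⟩ := hx
  obtain ⟨⟨a', b', c', d'⟩, hq', rfl⟩ := hy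
  have hr : (a, b, c, d) * (a, a, d, d)⁻¹ * (c', d', a', b') ∈ Q :=
    Q.mul_mem (Q.mul_mem hq (Q.inv_mem (hQ.collapse_mem hq))) (hQ.swap_mem hq')
  convert hQ.conj_mem_image (d' * c'⁻¹) ⟨_, hr, rfl⟩ using 1
  simp only [quadPath, Prod.mk_mul_mk, Prod.inv_mk]
  group

theorem exists_normal_coe_eq_image (hQ : IsSymmetricQuadSubgroup Q) :
    ∃ N : Subgroup G, N.Normal ∧ (N : Set G) = quadPath '' Q :=
  ⟨{ carrier := quadPath '' Q
     one_mem' := ⟨1, Q.one_mem, by simp [quadPath]⟩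
     mul_mem' := hQ.mul_mem_image
     inv_mem' := hQ.inv_mem_image },
   ⟨fun _ hx g => hQ.conj_mem_image g hx⟩, rfl⟩

end IsSymmetricQuadSubgroup

end

section

variable {G H K : Type*} [Group G] [Group H] [Group K]

def symmGenerators (f : G →* H) (h : G →* K) (A : Set G) : Set (G × G × G × G) :=
  {(a, b, c, d) : G × G × G × G | (a ∈ A ∧ b ∈ A ∧ c ∈ A ∧ d ∈ A) ∧
    f a = f b ∧ f d = f c ∧ h a = h d ∧ h b = h c}

def symmQuads (f : G →* H) (h : G →* K) (A : Set G) : Subgroup (G × G × G × G) :=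
  closure (symmGenerators f h A)

variable {f : G →* H} {h : G →* K} {A : Set G}

theorem isSymmQuad_iff_mem_symmQuads {ga gb gc gd : G} :
    IsSymmQuad f h A ga gb gc gd ↔ (ga, gb, gc, gd) ∈ symmQuads f h A := by
  rw [symmQuads, mem_closure_iff_exists_prod_ofFn_zpow]
  constructor
  · rintro ⟨n, a, b, c, d, δ, hA, hrel, hδ, rfl, rfl, rfl, rfl⟩
    refine ⟨n, fun i => (a i, b i, c i, d i), δ, fun i => ⟨hA i, hrel i⟩, hδ, ?_⟩
    simp only [Prod.ext_iff, Prod.fst_list_prod, Prod.snd_list_prod, List.map_ofFn,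
      Function.comp_def]
    exact ⟨rfl, rfl, rfl, rfl⟩
  · rintro ⟨n, q, δ, hq, hδ, he⟩
    refine ⟨n, fun i => (q i).1, fun i => (q i).2.1, fun i => (q i).2.2.1, fun i => (q i).2.2.2, δ,
      fun i => (hq i).1, fun i => (hq i).2, hδ, ?_⟩
    simp only [Prod.ext_iff, Prod.fst_list_prod, Prod.snd_list_prod, List.map_ofFn,
      Function.comp_def] at he
    exact he

theorem symmPaths2_eq_image : symmPaths2 f h A = quadPath '' symmQuads f h A := by
  ext x
  constructor
  · rintro ⟨ga, gb, gc, gd, hq, rfl⟩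
    exact ⟨(ga, gb, gc, gd), isSymmQuad_iff_mem_symmQuads.1 hq, rfl⟩
  · rintro ⟨⟨ga, gb, gc, gd⟩, hq, rfl⟩
    exact ⟨ga, gb, gc, gd, isSymmQuad_iff_mem_symmQuads.2 hq, rfl⟩

theorem isSymmetricQuadSubgroup_symmQuads (hA : closure A = ⊤) :
    IsSymmetricQuadSubgroup (symmQuads f h A) where
  diag_mem g := apply_mem_closure_of_mapsTo (T := symmGenerators f h A)
    (σ := MonoidHom.mk' (fun g : G => (g, g, g, g)) fun _ _ => rfl)
    (fun _ ha => ⟨⟨ha, ha, ha, ha⟩, rfl, rfl, rfl, rfl⟩) (hA ▸ mem_top g)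
  swap_mem hq := apply_mem_closure_of_mapsTo
    (σ := MonoidHom.mk' (fun q : G × G × G × G => (q.2.2.1, q.2.2.2, q.1, q.2.1)) fun _ _ => rfl)
    (fun ⟨_, _, _, _⟩ ⟨⟨ha, hb, hc, hd⟩, hab, hdc, had, hbc⟩ =>
      ⟨⟨hc, hd, ha, hb⟩, hdc.symm, hab.symm, hbc.symm, had.symm⟩) hq
  reverse_mem hq := apply_mem_closure_of_mapsTo
    (σ := MonoidHom.mk' (fun q : G × G × G × G => (q.2.2.2, q.2.2.1, q.2.1, q.1)) fun _ _ => rfl)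
    (fun ⟨_, _, _, _⟩ ⟨⟨ha, hb, hc, hd⟩, hab, hdc, had, hbc⟩ =>
      ⟨⟨hd, hc, hb, ha⟩, hdc, hab, had.symm, hbc.symm⟩) hq
  collapse_mem hq := apply_mem_closure_of_mapsTo
    (σ := MonoidHom.mk' (fun q : G × G × G × G => (q.1, q.1, q.2.2.2, q.2.2.2)) fun _ _ => rfl)
    (fun ⟨_, _, _, _⟩ ⟨⟨ha, _, _, hd⟩, _, _, had, _⟩ => ⟨⟨ha, ha, hd, hd⟩, rfl, rfl, had, had⟩) hq

end

theorem symmPaths2_isNormalSubgroup {G H K : Type*} [Group G] [Group H] [Group K]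
    (f : G →* H) (h : G →* K) (A : Set G) (hA : Subgroup.closure A = ⊤) :
    ∃ N : Subgroup G, N.Normal ∧ (N : Set G) = symmPaths2 f h A := by
  rw [symmPaths2_eq_image]
  exact (isSymmetricQuadSubgroup_symmQuads hA).exists_normal_coe_eq_image
end

section
/- Let f : A → B and h : A → C be surjective functions between sets such that the equivalence relations Eq(f) and Eq(h) commute: Eq(f) ∘ Eq(h) = Eq(h) ∘ Eq(f). Then Ker(F(f)) ∩ Ker(F(h)) equals the set of ⟨F(f),F(h)⟩-symmetric paths in F(A) with respect to the generating set A. -/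
/-- The kernel pair of a function, as a relation. -/
def EqRel {A B : Type*} (f : A → B) : A → A → Prop := fun a b => f a = f b

/-!
For any two homomorphisms, a symmetric quadruple satisfies `f ga = f gb`, `f gd = f gc`,
`h ga = h gd`, `h gb = h gc`, so its path lies in both kernels.

Conversely, as `Eq(f)` and `Eq(h)` commute, `Eq(f) ∘ Eq(h)` is an equivalence relation. Picking a
representative `ε x` of the class of each letter `x`, one finds letters `σ x` and `τ x` with
`x ~f σ x ~h ε x` and `x ~h τ x ~f ε x`, where `σ` and `ε` are constant on `f`-fibres and `τ` on
`h`-fibres. Substituting `(x, σ x, ε x, τ x)` letterwise into a word for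
`g ∈ Ker F(f) ∩ Ker F(h)` yields a symmetric quadruple `(g, 1, 1, 1)`, whose path is `g`.
-/

open Function

namespace FreeGroup

variable {α β γ : Type*}

lemma map_mk_eq_prod_ofFn (p : α → β) (L : List (α × Bool)) :
    map p (mk L) =
      (List.ofFn fun i : Fin L.length => of (p L[i].1) ^ cond L[i].2 (1 : ℤ) (-1)).prod := by
  rw [map_eq_lift, lift_mk, ← List.ofFn_getElem_eq_map]
  congr 2
  funext i
  cases L[i].2 <;> simp

lemma ker_map_le_ker_map_of_factorsThrough {f : α → β} {φ : α → γ} (hφ : φ.FactorsThrough f) :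
    (map f).ker ≤ (map φ).ker := by
  have hcomp : map φ = (lift (extend f (of ∘ φ) 1)).comp (map f) :=
    ext_hom _ _ fun a => by simp [(hφ.comp_left of).extend_apply]
  intro g hg
  rw [MonoidHom.mem_ker] at hg ⊢
  rw [hcomp, MonoidHom.comp_apply, hg, _root_.map_one]

end FreeGroup

section SymmetricPaths

variable {G H K : Type*} [Group G] [Group H] [Group K]

lemma map_prod_ofFn_zpow_congr (φ : G →* H) {n : ℕ} {a b : Fin n → G} (δ : Fin n → ℤ)
    (hab : ∀ i, φ (a i) = φ (b i)) :
    φ (List.ofFn fun i => a i ^ δ i).prod = φ (List.ofFn fun i => b i ^ δ i).prod := by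
  simp only [map_list_prod, List.map_ofFn, Function.comp_def, map_zpow, hab]

lemma IsSymmQuad.map_eq {f : G →* H} {h : G →* K} {A : Set G} {ga gb gc gd : G}
    (hq : IsSymmQuad f h A ga gb gc gd) :
    f ga = f gb ∧ f gd = f gc ∧ h ga = h gd ∧ h gb = h gc := by
  obtain ⟨n, a, b, c, d, δ, -, hrel, -, rfl, rfl, rfl, rfl⟩ := hq
  exact ⟨map_prod_ofFn_zpow_congr f δ fun i => (hrel i).1,
    map_prod_ofFn_zpow_congr f δ fun i => (hrel i).2.1,
    map_prod_ofFn_zpow_congr h δ fun i => (hrel i).2.2.1,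
    map_prod_ofFn_zpow_congr h δ fun i => (hrel i).2.2.2⟩

lemma symmPaths2_subset_ker_inter_ker (f : G →* H) (h : G →* K) (A : Set G) :
    symmPaths2 f h A ⊆ (f.ker : Set G) ∩ h.ker := by
  rintro _ ⟨ga, gb, gc, gd, hq, rfl⟩
  obtain ⟨hfab, hfdc, hhad, hhbc⟩ := hq.map_eq
  refine ⟨?_, ?_⟩
  · rw [SetLike.mem_coe, MonoidHom.mem_ker, map_mul, map_mul, map_mul, map_inv, map_inv, hfab,
      hfdc]
    group
  · rw [SetLike.mem_coe, MonoidHom.mem_ker, map_mul, map_mul, map_mul, map_inv, map_inv, hhad,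
      ← hhbc]
    group

lemma isSymmQuad_map {α : Type*} (f : FreeGroup α →* H) (h : FreeGroup α →* K)
    (p q r s : α → α)
    (hpqrs : ∀ x, f (.of (p x)) = f (.of (q x)) ∧ f (.of (s x)) = f (.of (r x)) ∧
      h (.of (p x)) = h (.of (s x)) ∧ h (.of (q x)) = h (.of (r x)))
    (g : FreeGroup α) :
    IsSymmQuad f h (Set.range FreeGroup.of)
      (FreeGroup.map p g) (FreeGroup.map q g) (FreeGroup.map r g) (FreeGroup.map s g) := by
  have hsign (b : Bool) : cond b (1 : ℤ) (-1) = 1 ∨ cond b (1 : ℤ) (-1) = -1 := by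
    cases b <;> simp
  rcases g with ⟨L⟩
  refine ⟨L.length, fun i => .of (p L[i].1), fun i => .of (q L[i].1), fun i => .of (r L[i].1),
    fun i => .of (s L[i].1), fun i => cond L[i].2 (1 : ℤ) (-1),
    fun i => ⟨⟨_, rfl⟩, ⟨_, rfl⟩, ⟨_, rfl⟩, ⟨_, rfl⟩⟩, fun i => hpqrs _, fun i => hsign _,
    FreeGroup.map_mk_eq_prod_ofFn _ _, FreeGroup.map_mk_eq_prod_ofFn _ _,
    FreeGroup.map_mk_eq_prod_ofFn _ _, FreeGroup.map_mk_eq_prod_ofFn _ _⟩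

end SymmetricPaths

section CommutingKernelPairs

variable {A B C : Type*} {f : A → B} {h : A → C}

lemma equivalence_comp_eqRel
    (hcomm : Relation.Comp (EqRel f) (EqRel h) = Relation.Comp (EqRel h) (EqRel f)) :
    Equivalence (Relation.Comp (EqRel f) (EqRel h)) := by
  have swap {x y} : Relation.Comp (EqRel f) (EqRel h) x y ↔
      Relation.Comp (EqRel h) (EqRel f) x y := by rw [hcomm]
  refine ⟨fun x => ⟨x, rfl, rfl⟩, fun hxy => ?_, fun ⟨z, hxz, hzy⟩ ⟨z', hyz', hz'u⟩ => ?_⟩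
  · obtain ⟨w, hxw, hwy⟩ := swap.1 hxy
    exact ⟨w, hwy.symm, hxw.symm⟩
  · obtain ⟨v, hzv, hvz'⟩ := swap.2 ⟨_, hzy, hyz'⟩
    exact ⟨v, hxz.trans hzv, hvz'.trans hz'u⟩

lemma exists_invariant_choice {α β : Type*} {R : α → α → Prop} {p : α → β → Prop}
    (hp : ∀ ⦃x y⦄, R x y → p x = p y) (hex : ∀ x, ∃ z, p x z) :
    ∃ σ : α → β, (∀ ⦃x y⦄, R x y → σ x = σ y) ∧ ∀ x, p x (σ x) := by
  refine ⟨fun x => @Classical.epsilon β ⟨(hex x).choose⟩ (p x),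
    fun x y hxy => ?_, fun x => Classical.epsilon_spec (hex x)⟩
  simp only [hp hxy]

lemma exists_symm_letter_maps
    (hcomm : Relation.Comp (EqRel f) (EqRel h) = Relation.Comp (EqRel h) (EqRel f)) :
    ∃ σ ε τ : A → A, σ.FactorsThrough f ∧ ε.FactorsThrough f ∧ τ.FactorsThrough h ∧
      ∀ x, f x = f (σ x) ∧ f (τ x) = f (ε x) ∧ h x = h (τ x) ∧ h (σ x) = h (ε x) := by
  set r := Relation.Comp (EqRel f) (EqRel h)
  have hr : Equivalence r := equivalence_comp_eqRel hcomm
  obtain ⟨ε, hε, hrε⟩ := exists_invariant_choice (R := r) (p := r)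
    (fun x y hxy => funext fun z => propext ⟨hr.trans (hr.symm hxy), hr.trans hxy⟩)
    (fun x => ⟨x, hr.refl x⟩)
  have hεf : ε.FactorsThrough f := fun x y hxy => hε ⟨y, hxy, rfl⟩
  have hεh : ε.FactorsThrough h := fun x y hxy => hε ⟨x, rfl, hxy⟩
  obtain ⟨σ, hσ, hσx⟩ := exists_invariant_choice (R := EqRel f)
    (p := fun x z => f z = f x ∧ h z = h (ε x))
    (fun x y hxy => by simp only [EqRel] at hxy; simp only [hxy, hεf hxy])
    (fun x => let ⟨z, hxz, hzε⟩ := hrε x; ⟨z, hxz.symm, hzε⟩)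
  obtain ⟨τ, hτ, hτx⟩ := exists_invariant_choice (R := EqRel h)
    (p := fun x z => h z = h x ∧ f z = f (ε x))
    (fun x y hxy => by simp only [EqRel] at hxy; simp only [hxy, hεh hxy])
    (fun x => let ⟨z, hxz, hzε⟩ := (hcomm ▸ hrε x : Relation.Comp (EqRel h) (EqRel f) x (ε x))
      ⟨z, hxz.symm, hzε⟩)
  exact ⟨σ, ε, τ, hσ, hεf, hτ,
    fun x => ⟨(hσx x).1.symm, (hτx x).2, (hτx x).1.symm, (hσx x).2⟩⟩

end CommutingKernelPairs

theorem inter_ker_eq_symmPaths2_general {A B C : Type} (f : A → B) (h : A → C)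
    (hcomm : Relation.Comp (EqRel f) (EqRel h) = Relation.Comp (EqRel h) (EqRel f)) :
    ((FreeGroup.map f).ker : Set (FreeGroup A)) ∩ ((FreeGroup.map h).ker : Set (FreeGroup A)) =
      symmPaths2 (FreeGroup.map f) (FreeGroup.map h)
        (Set.range (FreeGroup.of : A → FreeGroup A)) := by
  refine Set.Subset.antisymm ?_ (symmPaths2_subset_ker_inter_ker _ _ _)
  rintro g ⟨hfg, hhg⟩
  obtain ⟨σ, ε, τ, hσ, hε, hτ, hletters⟩ := exists_symm_letter_maps hcomm
  have hquad := isSymmQuad_map (FreeGroup.map f) (FreeGroup.map h) id σ ε τ (fun x => by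
    obtain ⟨hσx, hτε, hτx, hσε⟩ := hletters x
    simp only [FreeGroup.map.of, id, hσx, hτε, hτx, hσε, and_self]) g
  rw [FreeGroup.map.id] at hquad
  refine ⟨_, _, _, _, hquad, ?_⟩
  rw [FreeGroup.ker_map_le_ker_map_of_factorsThrough hσ hfg, FreeGroup.ker_map_le_ker_map_of_factorsThrough hε hfg,
    FreeGroup.ker_map_le_ker_map_of_factorsThrough hτ hhg]
  group

theorem inter_ker_eq_symmPaths2 {A B C : Type} (f : A → B) (h : A → C)
    (hf : Function.Surjective f) (hh : Function.Surjective h)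
    (hcomm : Relation.Comp (EqRel f) (EqRel h) = Relation.Comp (EqRel h) (EqRel f)) :
    ((FreeGroup.map f).ker : Set (FreeGroup A)) ∩ ((FreeGroup.map h).ker : Set (FreeGroup A)) =
      symmPaths2 (FreeGroup.map f) (FreeGroup.map h)
        (Set.range (FreeGroup.of : A → FreeGroup A)) :=
  inter_ker_eq_symmPaths2_general f h hcomm
end

section
/- Consider a commutative square of surjective functions f₁ : A₁ → B₁, f_G : A₁ → A₀, f_H : B₁ → B₀, f₀ : A₀ → B₀ (with f₀ ∘ f_G = f_H ∘ f₁) such that the induced map p : A₁ → P = {(a,b) ∈ A₀ × B₁ : f₀(a) = f_H(b)}, p(x) = (f_G(x), f₁(x)), is surjective. Then the kernel pairs Eq(f₁) and Eq(f_G) commute: Eq(f₁) ∘ Eq(f_G) = Eq(f_G) ∘ Eq(f₁). -/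
/-- If `a ~f₁~ c ~fG~ b`, then `(fG a, f₁ b)` lies in the pullback, and a preimage `d` of it
under `p` gives the path `a ~fG~ d ~f₁~ b`. -/
theorem comp_eqRel_le_of_surjective_to_pullback {A₁ B₁ A₀ B₀ : Type*}
    {f₁ : A₁ → B₁} {fG : A₁ → A₀} {fH : B₁ → B₀} {f₀ : A₀ → B₀}
    (hsq : ∀ x, f₀ (fG x) = fH (f₁ x))
    (hp : ∀ a b, f₀ a = fH b → ∃ x, fG x = a ∧ f₁ x = b) :
    Relation.Comp (EqRel f₁) (EqRel fG) ≤ Relation.Comp (EqRel fG) (EqRel f₁) := by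
  rintro a b ⟨c, hac, hcb⟩
  have hpull : f₀ (fG a) = fH (f₁ b) := by
    rw [hsq a, hac, ← hsq c, hcb, hsq b]
  obtain ⟨d, hda, hdb⟩ := hp _ _ hpull
  exact ⟨d, hda.symm, hdb⟩

theorem kernelPairs_commute_of_doubleExtension_general
    {A₁ B₁ A₀ B₀ : Type*} (f₁ : A₁ → B₁) (fG : A₁ → A₀) (fH : B₁ → B₀) (f₀ : A₀ → B₀)
    (hsq : ∀ x : A₁, f₀ (fG x) = fH (f₁ x))
    (hp : ∀ (a : A₀) (b : B₁), f₀ a = fH b → ∃ x : A₁, fG x = a ∧ f₁ x = b) :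
    Relation.Comp (EqRel f₁) (EqRel fG) = Relation.Comp (EqRel fG) (EqRel f₁) :=
  le_antisymm (comp_eqRel_le_of_surjective_to_pullback hsq hp)
    -- the hypotheses are symmetric under exchanging the roles of `f₁, fH` and `fG, f₀`
    (comp_eqRel_le_of_surjective_to_pullback (fun x => (hsq x).symm)
      fun b a h => (hp a b h.symm).imp fun _ => And.symm)

theorem kernelPairs_commute_of_doubleExtension
    {A₁ B₁ A₀ B₀ : Type*} (f₁ : A₁ → B₁) (fG : A₁ → A₀) (fH : B₁ → B₀) (f₀ : A₀ → B₀)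
    (hf₁ : Function.Surjective f₁) (hfG : Function.Surjective fG)
    (hfH : Function.Surjective fH) (hf₀ : Function.Surjective f₀)
    (hsq : ∀ x : A₁, f₀ (fG x) = fH (f₁ x))
    (hp : ∀ (a : A₀) (b : B₁), f₀ a = fH b → ∃ x : A₁, fG x = a ∧ f₁ x = b) :
    Relation.Comp (EqRel f₁) (EqRel fG) = Relation.Comp (EqRel fG) (EqRel f₁) :=
  kernelPairs_commute_of_doubleExtension_general f₁ fG fH f₀ hsq hp
end

section
/- Let f : G → H and h : G → K be group homomorphisms and A ⊆ G a generating set. The set of ⟨f,h⟩-symmetric paths contains the normal closure in G of the set { a·b⁻¹·c·d⁻¹ | (a,b,c,d) ∈ A⁴, f(a)=f(b), f(d)=f(c), h(a)=h(d), h(b)=h(c) }. -/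
/-!
Encode quadruples as `Fin 4 → G`. The `⟨f,h⟩`-symmetric quadruples `(g_a, g_b, g_c, g_d)` of words
are the elements of the subgroup of `G⁴` generated by the symmetric quadruples of generators, and
the symmetric paths are the image of that subgroup under `q ↦ q₀ q₁⁻¹ q₂ q₃⁻¹`. The generating
quadruples are stable under the reindexings `(a, a, d, d)`, `(c, d, a, b)`, `(d, c, b, a)` and
contain the diagonal `(a, a, a, a)`; as `A` generates `G`, the subgroup contains every diagonal
`(g, g, g, g)`. These operations show that the image is closed under products, inverses and
conjugation, i.e. a normal subgroup, and it contains each generator `a b⁻¹ c d⁻¹` of the normal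
closure.
-/

namespace Subgroup

variable {G N : Type*} [Group G] [Group N]

theorem apply_mem_closure_of_mapsTo_s19 {φ : G →* N} {s : Set G} {t : Set N}
    (hst : Set.MapsTo φ s t) {g : G} (hg : g ∈ closure s) : φ g ∈ closure t :=
  (closure_le ((closure t).comap φ)).2 (fun _ hx => subset_closure (hst hx)) hg

theorem comp_mem_closure {ι : Type*} {Q : Set (ι → G)} (τ : ι → ι)
    (hQ : ∀ q ∈ Q, q ∘ τ ∈ Q) {q : ι → G} (hq : q ∈ closure Q) : q ∘ τ ∈ closure Q :=
  apply_mem_closure_of_mapsTo_s19 (φ := MonoidHom.pi fun i => Pi.evalMonoidHom (fun _ => G) (τ i))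
    hQ hq

theorem exists_list_zpow_of_mem_closure {s : Set G} {g : G} (hg : g ∈ closure s) :
    ∃ l : List (G × ℤ), (∀ y ∈ l, y.1 ∈ s ∧ (y.2 = 1 ∨ y.2 = -1)) ∧
      (l.map fun y => y.1 ^ y.2).prod = g := by
  induction hg using closure_induction with
  | mem x hx => exact ⟨[(x, 1)], by simpa using hx, by simp⟩
  | one => exact ⟨[], by simp, by simp⟩
  | mul x y _ _ hx hy =>
    obtain ⟨l₁, hl₁, rfl⟩ := hx
    obtain ⟨l₂, hl₂, rfl⟩ := hy
    refine ⟨l₁ ++ l₂, fun y hy => ?_, by simp⟩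
    rcases List.mem_append.1 hy with hy | hy
    exacts [hl₁ y hy, hl₂ y hy]
  | inv x _ hx =>
    obtain ⟨l, hl, rfl⟩ := hx
    refine ⟨(l.map fun y => (y.1, -y.2)).reverse, ?_, ?_⟩
    · simp only [List.mem_reverse, List.mem_map, forall_exists_index, and_imp]
      rintro _ y hy rfl
      refine ⟨(hl y hy).1, ?_⟩
      rcases (hl y hy).2 with h | h <;> simp [h]
    · simp [List.prod_inv_reverse, zpow_neg, Function.comp_def]

end Subgroup

namespace SymmPath

open Subgroup

variable {G H K : Type*} [Group G] [Group H] [Group K] (f : G →* H) (h : G →* K) (A : Set G)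

def symmQuads : Set (Fin 4 → G) :=
  {q | (∀ i, q i ∈ A) ∧ f (q 0) = f (q 1) ∧ f (q 3) = f (q 2) ∧ h (q 0) = h (q 3) ∧
    h (q 1) = h (q 2)}

def pathOf (q : Fin 4 → G) : G := q 0 * (q 1)⁻¹ * q 2 * (q 3)⁻¹

theorem isSymmQuad_of_mem_closure {q : Fin 4 → G} (hq : q ∈ closure (symmQuads f h A)) :
    IsSymmQuad f h A (q 0) (q 1) (q 2) (q 3) := by
  obtain ⟨l, hl, rfl⟩ := exists_list_zpow_of_mem_closure hq
  have hl' : ∀ i : Fin l.length, _ := fun i => hl _ (List.getElem_mem i.2)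
  refine ⟨l.length, fun i => l[i].1 0, fun i => l[i].1 1, fun i => l[i].1 2, fun i => l[i].1 3,
    fun i => l[i].2, fun i => ⟨(hl' i).1.1 0, (hl' i).1.1 1, (hl' i).1.1 2, (hl' i).1.1 3⟩,
    fun i => (hl' i).1.2, fun i => (hl' i).2, ?_, ?_, ?_, ?_⟩ <;>
  simp only [Pi.list_prod_apply, List.map_map] <;>
  exact congrArg List.prod (List.ofFn_getElem_eq_map l _).symm

theorem pathOf_image_subset_symmPaths2 :
    pathOf '' (closure (symmQuads f h A) : Set (Fin 4 → G)) ⊆ symmPaths2 f h A := by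
  rintro _ ⟨q, hq, rfl⟩
  exact ⟨_, _, _, _, isSymmQuad_of_mem_closure f h A hq, rfl⟩

variable {f h A}

theorem comp_mem_closure_symmQuads {q : Fin 4 → G} (hq : q ∈ closure (symmQuads f h A))
    (τ : Fin 4 → Fin 4) (hτ : ∀ {q}, q ∈ symmQuads f h A →
      f (q (τ 0)) = f (q (τ 1)) ∧ f (q (τ 3)) = f (q (τ 2)) ∧
      h (q (τ 0)) = h (q (τ 3)) ∧ h (q (τ 1)) = h (q (τ 2))) :
    q ∘ τ ∈ closure (symmQuads f h A) :=
  comp_mem_closure (Q := symmQuads f h A) τ (fun _ hq => ⟨fun i => hq.1 (τ i), hτ hq⟩) hq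

theorem const_mem_closure_symmQuads (hA : closure A = ⊤) (g : G) :
    (fun _ => g) ∈ closure (symmQuads f h A) :=
  apply_mem_closure_of_mapsTo_s19 (φ := Pi.constMonoidHom (Fin 4) G) (t := symmQuads f h A)
    (fun _ ha => ⟨fun _ => ha, rfl, rfl, rfl, rfl⟩) (hA ▸ mem_top g)

theorem pathOf_const_mul (g : G) (q : Fin 4 → G) :
    pathOf ((fun _ => g) * q) = g * pathOf q * g⁻¹ := by
  simp only [pathOf, Pi.mul_apply]
  group

/-- `p * (p ∘ ![0, 0, 3, 3])⁻¹ = (1, p₁ p₀⁻¹, p₂ p₃⁻¹, 1)` carries the path of `p` in its middle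
entries; multiplying by the rotated `q` and conjugating appends the path of `q`. -/
theorem pathOf_mul_pathOf (p q : Fin 4 → G) :
    pathOf p * pathOf q =
      pathOf ((fun _ => q 3 * (q 2)⁻¹) * (p * (p ∘ ![0, 0, 3, 3])⁻¹ * q ∘ ![2, 3, 0, 1])) := by
  simp only [pathOf, Pi.mul_apply, Pi.inv_apply, Function.comp_apply, Matrix.cons_val_zero,
    Matrix.cons_val_one, Matrix.cons_val]
  group

theorem pathOf_comp_rev (q : Fin 4 → G) : pathOf (q ∘ ![3, 2, 1, 0]) = (pathOf q)⁻¹ := by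
  simp only [pathOf, Function.comp_apply, Matrix.cons_val_zero, Matrix.cons_val_one,
    Matrix.cons_val]
  group

variable (f h) in
def symmPathSubgroup (hA : closure A = ⊤) : Subgroup G where
  carrier := pathOf '' (closure (symmQuads f h A) : Set (Fin 4 → G))
  one_mem' := ⟨1, one_mem _, by simp [pathOf]⟩
  mul_mem' := by
    rintro _ _ ⟨p, hp, rfl⟩ ⟨q, hq, rfl⟩
    have hp' := comp_mem_closure_symmQuads hp ![0, 0, 3, 3]
      fun ⟨_, _, _, h₀₃, _⟩ => ⟨rfl, rfl, h₀₃, h₀₃⟩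
    have hq' := comp_mem_closure_symmQuads hq ![2, 3, 0, 1]
      fun ⟨_, f₀₁, f₃₂, h₀₃, h₁₂⟩ => ⟨f₃₂.symm, f₀₁.symm, h₁₂.symm, h₀₃.symm⟩
    exact ⟨_, mul_mem (const_mem_closure_symmQuads hA _) (mul_mem (mul_mem hp (inv_mem hp')) hq'),
      (pathOf_mul_pathOf p q).symm⟩
  inv_mem' := by
    rintro _ ⟨q, hq, rfl⟩
    exact ⟨_, comp_mem_closure_symmQuads hq ![3, 2, 1, 0]
      (fun ⟨_, f₀₁, f₃₂, h₀₃, h₁₂⟩ => ⟨f₃₂, f₀₁, h₀₃.symm, h₁₂.symm⟩), pathOf_comp_rev q⟩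

variable (f h) in
theorem symmPathSubgroup_normal (hA : closure A = ⊤) : (symmPathSubgroup f h hA).Normal where
  conj_mem := by
    rintro _ ⟨q, hq, rfl⟩ g
    exact ⟨_, mul_mem (const_mem_closure_symmQuads hA g) hq, pathOf_const_mul g q⟩

end SymmPath

theorem normalClosure_subset_symmPaths2 {G H K : Type*} [Group G] [Group H] [Group K]
    (f : G →* H) (h : G →* K) (A : Set G) (hA : Subgroup.closure A = ⊤) :
    (Subgroup.normalClosure
      {x : G | ∃ a b c d : G, a ∈ A ∧ b ∈ A ∧ c ∈ A ∧ d ∈ A ∧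
        f a = f b ∧ f d = f c ∧ h a = h d ∧ h b = h c ∧
        x = a * b⁻¹ * c * d⁻¹} : Set G) ⊆ symmPaths2 f h A := by
  have := SymmPath.symmPathSubgroup_normal f h hA
  refine subset_trans ?_ (SymmPath.pathOf_image_subset_symmPaths2 f h A)
  refine Subgroup.normalClosure_le_normal (N := SymmPath.symmPathSubgroup f h hA) ?_
  rintro _ ⟨a, b, c, d, ha, hb, hc, hd, f₀₁, f₃₂, h₀₃, h₁₂, rfl⟩
  refine ⟨![a, b, c, d], Subgroup.subset_closure ⟨?_, f₀₁, f₃₂, h₀₃, h₁₂⟩, rfl⟩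
  simp [Fin.forall_fin_succ, ha, hb, hc, hd]
end
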